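/- arXiv:2412.09145 — 3 statements merged into one kernel-verified Lean document; each statement's English description precedes it below -/
import Mathlib

section
/- For all reals a > 0 and b > 1 there exists a constant γ_{a,b} > 0, depending only on a and b, such that for every integer n ≥ 3, every t ∈ [0,1], every integer N with n/3 ≤ N ≤ 2n/3 − 1, and every real z ≠ 0, one has Σ_{k=1}^{N} (n−k−t)^{−a} (k+t)^{−b} e^{−z²/(2k)} ≤ γ_{a,b} / (n^a |z|^{2(b−1)}). -/
open Finset Real

/-- Bernoulli-type inequality: `(1 + q u)(1-u)^q ≤ 1`. -/
lemma aux_bern (q u : ℝ) (hq : 0 ≤ q) (hu0 : 0 ≤ u) (hu1 : u < 1) :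
    (1 + q * u) * (1 - u) ^ q ≤ 1 := by
  have h1 : (0:ℝ) < 1 + q * u := by nlinarith
  have h2 : (0:ℝ) < 1 - u := by linarith
  have hP : (0:ℝ) < (1 + q * u) * (1 - u) ^ q := by positivity
  have hlog : Real.log ((1 + q * u) * (1 - u) ^ q) ≤ 0 := by
    rw [Real.log_mul (ne_of_gt h1) (ne_of_gt (Real.rpow_pos_of_pos h2 q)),
      Real.log_rpow h2]
    have l1 : Real.log (1 + q * u) ≤ q * u := by
      have := Real.log_le_sub_one_of_pos h1; linarith
    have l2 : Real.log (1 - u) ≤ -u := by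
      have := Real.log_le_sub_one_of_pos h2; linarith
    have l3 : q * Real.log (1 - u) ≤ q * (-u) :=
      mul_le_mul_of_nonneg_left l2 hq
    linarith
  calc (1 + q * u) * (1 - u) ^ q = Real.exp (Real.log ((1 + q * u) * (1 - u) ^ q)) :=
        (Real.exp_log hP).symm
    _ ≤ Real.exp 0 := Real.exp_le_exp.2 hlog
    _ = 1 := Real.exp_zero

/-- Telescoping estimate: `(b-1) x^{-b} ≤ (x-1)^{-(b-1)} - x^{-(b-1)}` for `x ≥ 2`. -/
lemma aux_tele (b : ℝ) (hb : 1 < b) (x : ℝ) (hx : 2 ≤ x) :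
    (b - 1) * x ^ (-b) ≤ (x - 1) ^ (-(b-1)) - x ^ (-(b-1)) := by
  set q := b - 1 with hqdef
  have hq : 0 < q := sub_pos.2 hb
  have hx0 : (0:ℝ) < x := by linarith
  have hx1 : (0:ℝ) < x - 1 := by linarith
  have hu0 : (0:ℝ) ≤ 1 / x := by positivity
  have hu1 : 1 / x < 1 := by rw [div_lt_one hx0]; linarith
  have hber := aux_bern q (1/x) hq.le hu0 hu1
  have h1u : 1 - 1/x = (x - 1)/x := by field_simp
  rw [h1u, Real.div_rpow hx1.le hx0.le] at hber
  have hxq : (0:ℝ) < x ^ q := Real.rpow_pos_of_pos hx0 q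
  have hxq1 : (0:ℝ) < (x-1) ^ q := Real.rpow_pos_of_pos hx1 q
  have h2 : (1 + q * (1/x)) * (x-1) ^ q ≤ x ^ q := by
    rw [← mul_div_assoc, div_le_one hxq] at hber
    exact hber
  have hxb : x ^ (-b) = (x ^ q)⁻¹ * x⁻¹ := by
    rw [show -b = -q + (-1) by rw [hqdef]; ring, Real.rpow_add hx0,
      Real.rpow_neg hx0.le, Real.rpow_neg_one]
  rw [hxb, Real.rpow_neg hx0.le, Real.rpow_neg hx1.le]
  have lhs_eq : q * ((x ^ q)⁻¹ * x⁻¹) = q / (x ^ q * x) := by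
    rw [div_eq_mul_inv, mul_inv]
  rw [lhs_eq, inv_sub_inv hxq1.ne' hxq.ne',
    div_le_div_iff₀ (by positivity) (by positivity)]
  -- goal : q * ((x-1)^q * x^q) ≤ (x^q - (x-1)^q) * (x^q * x)
  have h5 : q * (x-1)^q ≤ (x^q - (x-1)^q) * x := by
    have h4 := mul_le_mul_of_nonneg_right h2 hx0.le
    have hxx2 : q * (1/x) * (x-1)^q * x = q * (x-1)^q := by field_simp
    nlinarith [h4, hxx2]
  nlinarith [mul_le_mul_of_nonneg_right h5 hxq.le]

/-- Tail estimate for the series `Σ k^{-b}`. -/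
lemma aux_tail (b : ℝ) (hb : 1 < b) (M : ℕ) (hM : 1 ≤ M) (N : ℕ) :
    ∑ k ∈ Finset.Ioc M N, (k:ℝ) ^ (-b) ≤ (M:ℝ) ^ (-(b-1)) / (b-1) := by
  have hq : (0:ℝ) < b - 1 := sub_pos.2 hb
  have hM0 : (0:ℝ) < (M:ℝ) := by exact_mod_cast hM
  rcases le_or_gt N M with hNM | hMN
  · rw [Finset.Ioc_eq_empty (by omega), Finset.sum_empty]
    positivity
  · have main : ∀ n : ℕ, M ≤ n →
        ∑ k ∈ Finset.Ioc M n, (k:ℝ) ^ (-b)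
          ≤ ((M:ℝ) ^ (-(b-1)) - (n:ℝ) ^ (-(b-1))) / (b-1) := by
      intro n hn
      induction n, hn using Nat.le_induction with
      | base => simp
      | succ n hn ih =>
        rw [Finset.sum_Ioc_succ_top hn]
        have htele := aux_tele b hb ((n:ℝ)+1) (by
          have : (1:ℝ) ≤ (n:ℝ) := by exact_mod_cast hM.trans hn
          linarith)
        have hcast : ((n+1 : ℕ):ℝ) = (n:ℝ) + 1 := by push_cast; ring
        have hsub : ((n:ℝ)+1) - 1 = (n:ℝ) := by ring
        rw [hsub] at htele
        rw [hcast]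
        have : ((n:ℝ)+1) ^ (-b) ≤ ((n:ℝ) ^ (-(b-1)) - ((n:ℝ)+1) ^ (-(b-1))) / (b-1) := by
          rw [le_div_iff₀ hq]; linarith [htele]
        calc ∑ k ∈ Finset.Ioc M n, (k:ℝ) ^ (-b) + ((n:ℝ)+1) ^ (-b)
            ≤ ((M:ℝ) ^ (-(b-1)) - (n:ℝ) ^ (-(b-1))) / (b-1)
              + ((n:ℝ) ^ (-(b-1)) - ((n:ℝ)+1) ^ (-(b-1))) / (b-1) := by
              exact add_le_add ih this
          _ = ((M:ℝ) ^ (-(b-1)) - ((n:ℝ)+1) ^ (-(b-1))) / (b-1) := by ring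
    have := main N hMN.le
    have hN0 : (0:ℝ) ≤ (N:ℝ) ^ (-(b-1)) := Real.rpow_nonneg (Nat.cast_nonneg N) _
    calc ∑ k ∈ Finset.Ioc M N, (k:ℝ) ^ (-b)
        ≤ ((M:ℝ) ^ (-(b-1)) - (N:ℝ) ^ (-(b-1))) / (b-1) := this
      _ ≤ (M:ℝ) ^ (-(b-1)) / (b-1) := by gcongr <;> linarith

/-- Pointwise bound `e^{-x} ≤ (b/e)^b x^{-b}` for `x > 0`. -/
lemma aux_exp (b x : ℝ) (hb : 0 < b) (hx : 0 < x) :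
    Real.exp (-x) ≤ (b / Real.exp 1) ^ b * x ^ (-b) := by
  have h1 : x / b ≤ Real.exp (x / b - 1) := by
    have := Real.add_one_le_exp (x / b - 1); linarith
  have h2 : x ≤ (b / Real.exp 1) * Real.exp (x / b) := by
    have he : Real.exp (x/b - 1) = Real.exp (x/b) / Real.exp 1 := by
      rw [Real.exp_sub]
    rw [he] at h1
    have hbpos := hb
    have hepos := Real.exp_pos 1
    rw [div_le_div_iff₀ hb hepos] at h1
    rw [div_mul_eq_mul_div, le_div_iff₀ hepos]
    linarith
  have h3 : x ^ b ≤ ((b / Real.exp 1) * Real.exp (x / b)) ^ b :=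
    Real.rpow_le_rpow hx.le h2 hb.le
  have h4 : ((b / Real.exp 1) * Real.exp (x / b)) ^ b
      = (b / Real.exp 1) ^ b * Real.exp x := by
    rw [Real.mul_rpow (by positivity) (Real.exp_pos _).le, ← Real.exp_mul]
    congr 1
    field_simp
  rw [h4] at h3
  have hxb : (0:ℝ) < x ^ b := Real.rpow_pos_of_pos hx b
  have hfin : Real.exp (-x) * x ^ b ≤ (b / Real.exp 1) ^ b := by
    calc Real.exp (-x) * x ^ b
        ≤ Real.exp (-x) * ((b / Real.exp 1) ^ b * Real.exp x) := by
          exact mul_le_mul_of_nonneg_left h3 (Real.exp_pos _).le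
      _ = (b / Real.exp 1) ^ b * (Real.exp (-x) * Real.exp x) := by ring
      _ = (b / Real.exp 1) ^ b := by rw [← Real.exp_add]; simp
  rw [Real.rpow_neg hx.le, ← div_eq_mul_inv, le_div_iff₀ hxb]
  exact hfin

/-- The key uniform bound: `Σ_{k=1}^N k^{-b} e^{-s/k} ≤ C_b s^{-(b-1)}`. -/
lemma aux_key (b : ℝ) (hb : 1 < b) :
    ∃ C : ℝ, 0 < C ∧ ∀ (N : ℕ) (s : ℝ), 0 < s →
      ∑ k ∈ Finset.Icc 1 N, (k:ℝ) ^ (-b) * Real.exp (-(s/k))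
        ≤ C * s ^ (-(b-1)) := by
  have hq : (0:ℝ) < b - 1 := sub_pos.2 hb
  set c : ℝ := (b / Real.exp 1) ^ b with hcdef
  have hc : 0 < c := by
    rw [hcdef]; apply Real.rpow_pos_of_pos; positivity
  refine ⟨1 + 2/(b-1) + 2*c, by positivity, ?_⟩
  intro N s hs
  have hspow : (0:ℝ) < s ^ (-(b-1)) := Real.rpow_pos_of_pos hs _
  have hexp1 : ∀ k : ℕ, 1 ≤ k → Real.exp (-(s/(k:ℝ))) ≤ 1 := by
    intro k hk
    have hk0 : (0:ℝ) < (k:ℝ) := by exact_mod_cast hk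
    have : -(s/(k:ℝ)) ≤ 0 := by
      have : 0 ≤ s/(k:ℝ) := by positivity
      linarith
    calc Real.exp (-(s/(k:ℝ))) ≤ Real.exp 0 := Real.exp_le_exp.2 this
      _ = 1 := Real.exp_zero
  rcases le_or_gt s 1 with hs1 | hs1
  · -- small s : each exponential is at most 1
    have hterm : ∀ k ∈ Finset.Icc 1 N,
        (k:ℝ) ^ (-b) * Real.exp (-(s/k)) ≤ (k:ℝ) ^ (-b) := by
      intro k hk
      have hk1 := (Finset.mem_Icc.1 hk).1
      exact mul_le_of_le_one_right (Real.rpow_nonneg (Nat.cast_nonneg k) _)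
        (hexp1 k hk1)
    have hsum1 : ∑ k ∈ Finset.Icc 1 N, (k:ℝ) ^ (-b) ≤ 1 + 1/(b-1) := by
      have hsub : Finset.Icc 1 N ⊆ insert 1 (Finset.Ioc 1 N) := by
        intro k hk
        simp only [Finset.mem_Icc, Finset.mem_insert, Finset.mem_Ioc] at *
        omega
      calc ∑ k ∈ Finset.Icc 1 N, (k:ℝ) ^ (-b)
          ≤ ∑ k ∈ insert 1 (Finset.Ioc 1 N), (k:ℝ) ^ (-b) := by
            apply Finset.sum_le_sum_of_subset_of_nonneg hsub
            intro k _ _; positivity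
        _ = ((1:ℕ):ℝ) ^ (-b) + ∑ k ∈ Finset.Ioc 1 N, (k:ℝ) ^ (-b) := by
            rw [Finset.sum_insert (by simp)]
        _ ≤ 1 + 1/(b-1) := by
            have ht := aux_tail b hb 1 le_rfl N
            simp only [Nat.cast_one, Real.one_rpow] at ht ⊢
            linarith [ht]
    have hone : (1:ℝ) ≤ s ^ (-(b-1)) := by
      have h := Real.rpow_le_rpow_of_nonpos hs hs1 (neg_nonpos.2 hq.le)
      simpa using h
    calc ∑ k ∈ Finset.Icc 1 N, (k:ℝ) ^ (-b) * Real.exp (-(s/k))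
        ≤ ∑ k ∈ Finset.Icc 1 N, (k:ℝ) ^ (-b) := Finset.sum_le_sum hterm
      _ ≤ 1 + 1/(b-1) := hsum1
      _ ≤ (1 + 1/(b-1)) * s ^ (-(b-1)) :=
          le_mul_of_one_le_right (by positivity) hone
      _ ≤ (1 + 2/(b-1) + 2*c) * s ^ (-(b-1)) := by
          apply mul_le_mul_of_nonneg_right _ hspow.le
          have h1 : 0 < 1/(b-1) := by positivity
          have h2 : 2/(b-1) = 2*(1/(b-1)) := by ring
          linarith
  · -- large s : split the sum at m = ⌈s⌉₊
    set m := ⌈s⌉₊ with hmdef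
    have hm1 : 1 ≤ m := Nat.one_le_ceil_iff.2 hs
    have hsm : s ≤ (m:ℝ) := Nat.le_ceil s
    have hm2s : (m:ℝ) ≤ 2*s := by
      have := Nat.ceil_lt_add_one hs.le
      have : (m:ℝ) < s + 1 := by exact_mod_cast this
      linarith
    have hsplit : ∑ k ∈ Finset.Icc 1 N, (k:ℝ) ^ (-b) * Real.exp (-(s/k))
        ≤ ∑ k ∈ Finset.Icc 1 m, (k:ℝ) ^ (-b) * Real.exp (-(s/k))
          + ∑ k ∈ Finset.Ioc m N, (k:ℝ) ^ (-b) * Real.exp (-(s/k)) := by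
      have hdisj : Disjoint (Finset.Icc 1 m) (Finset.Ioc m N) := by
        simp only [Finset.disjoint_left, Finset.mem_Icc, Finset.mem_Ioc]
        omega
      have hsub : Finset.Icc 1 N ⊆ Finset.Icc 1 m ∪ Finset.Ioc m N := by
        intro k hk
        simp only [Finset.mem_Icc, Finset.mem_union, Finset.mem_Ioc] at *
        omega
      calc ∑ k ∈ Finset.Icc 1 N, (k:ℝ) ^ (-b) * Real.exp (-(s/k))
          ≤ ∑ k ∈ Finset.Icc 1 m ∪ Finset.Ioc m N,
              (k:ℝ) ^ (-b) * Real.exp (-(s/k)) := by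
            apply Finset.sum_le_sum_of_subset_of_nonneg hsub
            intro k _ _; positivity
        _ = _ := Finset.sum_union hdisj
    have hhead : ∑ k ∈ Finset.Icc 1 m, (k:ℝ) ^ (-b) * Real.exp (-(s/k))
        ≤ 2*c * s ^ (-(b-1)) := by
      have hterm : ∀ k ∈ Finset.Icc 1 m,
          (k:ℝ) ^ (-b) * Real.exp (-(s/k)) ≤ c * s ^ (-b) := by
        intro k hk
        have hk1 := (Finset.mem_Icc.1 hk).1
        have hk0 : (0:ℝ) < (k:ℝ) := by exact_mod_cast hk1
        have hb0 : (0:ℝ) < b := by linarith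
        have hsk : (0:ℝ) < s/(k:ℝ) := by positivity
        have hexp := aux_exp b (s/(k:ℝ)) hb0 hsk
        have hdiv : (s/(k:ℝ)) ^ (-b) = s ^ (-b) / (k:ℝ) ^ (-b) :=
          Real.div_rpow hs.le hk0.le _
        have hkb : (0:ℝ) < (k:ℝ) ^ (-b) := Real.rpow_pos_of_pos hk0 _
        calc (k:ℝ) ^ (-b) * Real.exp (-(s/k))
            ≤ (k:ℝ) ^ (-b) * (c * (s ^ (-b) / (k:ℝ) ^ (-b))) := by
              apply mul_le_mul_of_nonneg_left _ hkb.le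
              rw [← hdiv]; exact hexp
          _ = c * s ^ (-b) := by
              field_simp
      calc ∑ k ∈ Finset.Icc 1 m, (k:ℝ) ^ (-b) * Real.exp (-(s/k))
          ≤ (Finset.Icc 1 m).card • (c * s ^ (-b)) :=
            Finset.sum_le_card_nsmul _ _ _ hterm
        _ = (m:ℝ) * (c * s ^ (-b)) := by
            rw [Nat.card_Icc, nsmul_eq_mul]
            norm_num
        _ ≤ 2*s * (c * s ^ (-b)) := by
            apply mul_le_mul_of_nonneg_right hm2s (by positivity)
        _ = 2*c * (s * s ^ (-b)) := by ring
        _ = 2*c * s ^ (-(b-1)) := by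
            congr 1
            rw [show -(b-1) = 1 + (-b) by ring, Real.rpow_add hs, Real.rpow_one]
    have htail : ∑ k ∈ Finset.Ioc m N, (k:ℝ) ^ (-b) * Real.exp (-(s/k))
        ≤ (1/(b-1)) * s ^ (-(b-1)) := by
      have hterm : ∀ k ∈ Finset.Ioc m N,
          (k:ℝ) ^ (-b) * Real.exp (-(s/k)) ≤ (k:ℝ) ^ (-b) := by
        intro k hk
        have hk1 : 1 ≤ k := le_trans hm1 (Finset.mem_Ioc.1 hk).1.le
        exact mul_le_of_le_one_right (Real.rpow_nonneg (Nat.cast_nonneg k) _)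
          (hexp1 k hk1)
      have hmono : (m:ℝ) ^ (-(b-1)) ≤ s ^ (-(b-1)) :=
        Real.rpow_le_rpow_of_nonpos hs hsm (neg_nonpos.2 hq.le)
      calc ∑ k ∈ Finset.Ioc m N, (k:ℝ) ^ (-b) * Real.exp (-(s/k))
          ≤ ∑ k ∈ Finset.Ioc m N, (k:ℝ) ^ (-b) := Finset.sum_le_sum hterm
        _ ≤ (m:ℝ) ^ (-(b-1)) / (b-1) := aux_tail b hb m hm1 N
        _ ≤ s ^ (-(b-1)) / (b-1) := by gcongr
        _ = (1/(b-1)) * s ^ (-(b-1)) := by ring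
    have hcoef : 2*c + 1/(b-1) ≤ 1 + 2/(b-1) + 2*c := by
      have h1 : 0 < 1/(b-1) := by positivity
      have h2 : 2/(b-1) = 2*(1/(b-1)) := by ring
      linarith
    calc ∑ k ∈ Finset.Icc 1 N, (k:ℝ) ^ (-b) * Real.exp (-(s/k))
        ≤ 2*c * s ^ (-(b-1)) + (1/(b-1)) * s ^ (-(b-1)) :=
          hsplit.trans (add_le_add hhead htail)
      _ = (2*c + 1/(b-1)) * s ^ (-(b-1)) := by ring
      _ ≤ (1 + 2/(b-1) + 2*c) * s ^ (-(b-1)) :=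
          mul_le_mul_of_nonneg_right hcoef hspow.le

/-- Lemma 1: a uniform bound for sums of the form
`Σ_{k=1}^{N} (n−k−t)^{−a} (k+t)^{−b} e^{−z²/(2k)}`. -/
theorem stmt_6 (a b : ℝ) (ha : 0 < a) (hb : 1 < b) :
    ∃ γ : ℝ, 0 < γ ∧
      ∀ n : ℕ, 3 ≤ n → ∀ t ∈ Set.Icc (0 : ℝ) 1,
        ∀ N : ℕ, (n : ℝ) / 3 ≤ N → (N : ℝ) ≤ 2 * n / 3 - 1 →
          ∀ z : ℝ, z ≠ 0 →
            ∑ k ∈ Finset.Icc 1 N,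
              ((n : ℝ) - k - t) ^ (-a) * ((k : ℝ) + t) ^ (-b) *
                Real.exp (-z ^ 2 / (2 * k))
            ≤ γ / ((n : ℝ) ^ a * |z| ^ (2 * (b - 1))) := by
  obtain ⟨C, hC, hkey⟩ := aux_key b hb
  refine ⟨(3:ℝ)^a * (2:ℝ)^(b-1) * C, by positivity, ?_⟩
  intro n hn t ht N hN1 hN2 z hz
  obtain ⟨ht0, ht1⟩ := ht
  have hn3 : (3:ℝ) ≤ (n:ℝ) := by exact_mod_cast hn
  have hn0 : (0:ℝ) < (n:ℝ) := by linarith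
  set s : ℝ := z^2/2 with hsdef
  have hs : (0:ℝ) < s := by positivity
  have hzabs : (0:ℝ) < |z| := abs_pos.2 hz
  have hterm : ∀ k ∈ Finset.Icc 1 N,
      ((n:ℝ) - k - t) ^ (-a) * ((k:ℝ) + t) ^ (-b) * Real.exp (-z^2/(2*k))
        ≤ ((3:ℝ)^a * (n:ℝ)^(-a)) * ((k:ℝ)^(-b) * Real.exp (-(s/k))) := by
    intro k hk
    obtain ⟨hk1, hkN⟩ := Finset.mem_Icc.1 hk
    have hk0 : (0:ℝ) < (k:ℝ) := by exact_mod_cast hk1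
    have hkN' : (k:ℝ) ≤ (N:ℝ) := by exact_mod_cast hkN
    have hnk : (n:ℝ)/3 ≤ (n:ℝ) - k - t := by linarith
    have hn3pos : (0:ℝ) < (n:ℝ)/3 := by linarith
    have e1 : ((n:ℝ) - k - t) ^ (-a) ≤ ((n:ℝ)/3) ^ (-a) :=
      Real.rpow_le_rpow_of_nonpos hn3pos hnk (neg_nonpos.2 ha.le)
    have e1' : ((n:ℝ)/3) ^ (-a) = (3:ℝ)^a * (n:ℝ)^(-a) := by
      rw [Real.div_rpow hn0.le (by norm_num : (0:ℝ) ≤ 3),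
        Real.rpow_neg hn0.le, Real.rpow_neg (by norm_num : (0:ℝ) ≤ 3)]
      have h3a : (0:ℝ) < (3:ℝ)^a := Real.rpow_pos_of_pos (by norm_num) a
      field_simp
    have e2 : ((k:ℝ) + t) ^ (-b) ≤ (k:ℝ) ^ (-b) :=
      Real.rpow_le_rpow_of_nonpos hk0 (by linarith)
        (neg_nonpos.2 (by linarith : (0:ℝ) ≤ b))
    have e3 : -z^2/(2*(k:ℝ)) = -(s/k) := by
      rw [hsdef]; field_simp
    rw [e3]
    have hexp : (0:ℝ) ≤ Real.exp (-(s/k)) := (Real.exp_pos _).le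
    have e4 : ((n:ℝ) - k - t) ^ (-a) * ((k:ℝ) + t) ^ (-b)
        ≤ ((3:ℝ)^a * (n:ℝ)^(-a)) * (k:ℝ)^(-b) := by
      apply mul_le_mul (e1.trans_eq e1') e2
        (Real.rpow_nonneg (by positivity) _) (by positivity)
    calc ((n:ℝ) - k - t) ^ (-a) * ((k:ℝ) + t) ^ (-b) * Real.exp (-(s/k))
        ≤ ((3:ℝ)^a * (n:ℝ)^(-a)) * (k:ℝ)^(-b) * Real.exp (-(s/k)) :=
          mul_le_mul_of_nonneg_right e4 hexp
      _ = ((3:ℝ)^a * (n:ℝ)^(-a)) * ((k:ℝ)^(-b) * Real.exp (-(s/k))) := by ring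
  calc ∑ k ∈ Finset.Icc 1 N,
        ((n:ℝ) - k - t) ^ (-a) * ((k:ℝ) + t) ^ (-b) * Real.exp (-z^2/(2*k))
      ≤ ∑ k ∈ Finset.Icc 1 N,
          ((3:ℝ)^a * (n:ℝ)^(-a)) * ((k:ℝ)^(-b) * Real.exp (-(s/k))) :=
        Finset.sum_le_sum hterm
    _ = ((3:ℝ)^a * (n:ℝ)^(-a)) *
          ∑ k ∈ Finset.Icc 1 N, (k:ℝ)^(-b) * Real.exp (-(s/k)) := by
        rw [Finset.mul_sum]
    _ ≤ ((3:ℝ)^a * (n:ℝ)^(-a)) * (C * s ^ (-(b-1))) := by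
        apply mul_le_mul_of_nonneg_left (hkey N s hs) (by positivity)
    _ = (3:ℝ)^a * (2:ℝ)^(b-1) * C / ((n:ℝ)^a * |z| ^ (2*(b-1))) := by
        have h1 : s ^ (-(b-1)) = (2:ℝ)^(b-1) * (|z| ^ (2*(b-1)))⁻¹ := by
          rw [hsdef, show z^2 = |z|^2 from (sq_abs z).symm,
            Real.div_rpow (by positivity) (by norm_num),
            show (|z|^2 : ℝ) = |z| ^ ((2:ℕ):ℝ) from (Real.rpow_natCast _ 2).symm,
            ← Real.rpow_mul (abs_nonneg z)]
          push_cast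
          rw [show (2:ℝ) * -(b-1) = -(2*(b-1)) by ring,
            Real.rpow_neg (abs_nonneg z),
            Real.rpow_neg (by norm_num : (0:ℝ) ≤ 2)]
          rw [div_eq_mul_inv, inv_inv, mul_comm]
        rw [h1, Real.rpow_neg hn0.le, div_eq_mul_inv, mul_inv]
        ring
end

section
/- For every natural number b and every real z ≠ 0, ∫_0^1 (1−u)^{−1/2} · u^{−b−3/2} · e^{−z²/(2u)} du = sgn(z) · √(2π) · e^{−z²/2} · Σ_{k=0}^{b} (2k−1)!! · C(b,k) · z^{−(2k+1)}, where C(b,k) denotes the binomial coefficient. -/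
open Finset Real MeasureTheory

/-!
With `c = z² / 2`, the substitution `u = 1 / (1 + t)` turns the integral into
`∫₀^∞ t^{-1/2} (1 + t)^b e^{-c(1+t)} dt`. Expanding `(1 + t)^b` binomially leaves the Gamma
integrals `∫₀^∞ t^{k-1/2} e^{-ct} dt = Γ(k + 1/2) / c^{k+1/2}`, and
`Γ(k + 1/2) = (2k - 1)!! √π / 2^k`; the odd power `|z|^{2k+1}` coming from `c^{k+1/2}`
is where `sign z` enters.
-/

theorem integral_Ioo_zero_one_comp_inv_sub_one {E : Type*} [NormedAddCommGroup E]
    [NormedSpace ℝ E] (f : ℝ → E) :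
    ∫ u in Set.Ioo (0 : ℝ) 1, (u ^ 2)⁻¹ • f (u⁻¹ - 1) = ∫ t in Set.Ioi 0, f t := by
  have himage : (fun u : ℝ => u⁻¹ - 1) '' Set.Ioo 0 1 = Set.Ioi 0 := by
    ext t
    constructor
    · rintro ⟨u, ⟨hu0, hu1⟩, rfl⟩
      simpa using (one_lt_inv₀ hu0).2 hu1
    · intro (ht : 0 < t)
      refine ⟨(1 + t)⁻¹, ⟨by positivity, inv_lt_one_of_one_lt₀ (by linarith)⟩, ?_⟩
      simp
  have hderiv : ∀ u ∈ Set.Ioo (0 : ℝ) 1,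
      HasDerivWithinAt (fun u : ℝ => u⁻¹ - 1) (-(u ^ 2)⁻¹) (Set.Ioo 0 1) u := fun u hu =>
    ((hasDerivAt_inv hu.1.ne').sub_const 1).hasDerivWithinAt
  have hinj : Set.InjOn (fun u : ℝ => u⁻¹ - 1) (Set.Ioo 0 1) := fun u _ v _ h =>
    inv_injective (sub_left_injective h)
  rw [← himage, integral_image_eq_integral_abs_deriv_smul measurableSet_Ioo hderiv hinj f]
  simp only [abs_neg, abs_inv, abs_sq]

theorem integral_Ioo_zero_one_eq_integral_Ioi (a s c : ℝ) :
    ∫ u in Set.Ioo (0 : ℝ) 1, (1 - u) ^ s * u ^ (-a - s - 2) * exp (-(c * u⁻¹))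
      = ∫ t in Set.Ioi 0, t ^ s * (1 + t) ^ a * exp (-(c * (1 + t))) := by
  rw [← integral_Ioo_zero_one_comp_inv_sub_one]
  refine setIntegral_congr_fun measurableSet_Ioo fun u ⟨hu0, hu1⟩ => ?_
  have hsub : u⁻¹ - 1 = (1 - u) * u⁻¹ := by field_simp
  have hadd : 1 + (u⁻¹ - 1) = u⁻¹ := by ring
  have hsq : (u ^ 2)⁻¹ = u ^ (-2 : ℝ) := by
    rw [rpow_neg hu0.le, ← rpow_natCast]; norm_num
  have hpow : u ^ (-a - s - 2) = u ^ (-2 : ℝ) * (u⁻¹ ^ s * u⁻¹ ^ a) := by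
    rw [inv_rpow hu0.le, inv_rpow hu0.le, ← rpow_neg hu0.le, ← rpow_neg hu0.le,
      ← rpow_add hu0, ← rpow_add hu0]
    ring_nf
  rw [smul_eq_mul, hadd, hsub, mul_rpow (by linarith) (by positivity), hsq, hpow]
  ring

theorem integral_rpow_mul_one_add_pow_mul_exp_neg_mul (b : ℕ) {s c : ℝ} (hs : -1 < s)
    (hc : 0 < c) :
    ∫ t in Set.Ioi 0, t ^ s * (1 + t) ^ b * exp (-(c * (1 + t)))
      = exp (-c) * ∑ k ∈ range (b + 1),
          (b.choose k : ℝ) * ((1 / c) ^ (k + s + 1) * Gamma (k + s + 1)) := by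
  have hpos : ∀ k : ℕ, 0 < (k : ℝ) + s + 1 := fun k => by
    linarith [(k.cast_nonneg : (0 : ℝ) ≤ k)]
  have hint : ∀ k : ℕ, IntegrableOn (fun t : ℝ => t ^ (k + s + 1 - 1) * exp (-(c * t)))
      (Set.Ioi 0) := fun k => by
    simpa [neg_mul] using integrableOn_rpow_mul_exp_neg_mul_rpow
      (by linarith [hpos k] : -1 < (k : ℝ) + s + 1 - 1) zero_lt_one hc
  have hexpand : ∀ t ∈ Set.Ioi (0 : ℝ), t ^ s * (1 + t) ^ b * exp (-(c * (1 + t)))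
      = ∑ k ∈ range (b + 1),
          exp (-c) * b.choose k * (t ^ (k + s + 1 - 1) * exp (-(c * t))) := by
    intro t (ht : 0 < t)
    have hexp : exp (-(c * (1 + t))) = exp (-c) * exp (-(c * t)) := by
      rw [← exp_add]; ring_nf
    have hrpow : ∀ k : ℕ, t ^ s * t ^ k = t ^ (k + s + 1 - 1) := fun k => by
      rw [← rpow_natCast, ← rpow_add ht]; ring_nf
    rw [hexp, add_comm 1 t, add_pow, mul_sum, sum_mul]
    refine sum_congr rfl fun k _ => ?_
    rw [← hrpow]
    ring
  rw [setIntegral_congr_fun measurableSet_Ioi hexpand,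
    integral_finsetSum _ fun k _ => (hint k).const_mul _, mul_sum]
  refine sum_congr rfl fun k _ => ?_
  rw [integral_const_mul, integral_rpow_mul_exp_neg_mul_Ioi (hpos k) hc]
  ring

theorem sign_mul_inv_pow_odd (z : ℝ) (n : ℕ) :
    Real.sign z * (z ^ (2 * n + 1))⁻¹ = (|z| ^ (2 * n + 1))⁻¹ := by
  rcases lt_trichotomy z 0 with h | rfl | h
  · rw [sign_of_neg h, abs_of_neg h, Odd.neg_pow ⟨n, rfl⟩, inv_neg, neg_one_mul]
  · simp
  · rw [sign_of_pos h, abs_of_pos h, one_mul]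

theorem one_div_sq_div_two_rpow_nat_add_half (z : ℝ) (k : ℕ) :
    (1 / (z ^ 2 / 2)) ^ ((k : ℝ) + 1 / 2) = √2 * 2 ^ k * (|z| ^ (2 * k + 1))⁻¹ := by
  have htwo : (2 : ℝ) ^ ((k : ℝ) + 1 / 2) = 2 ^ k * √2 := by
    rw [rpow_add two_pos, rpow_natCast, sqrt_eq_rpow]
  have hsq : (z ^ 2) ^ ((k : ℝ) + 1 / 2) = |z| ^ (2 * k + 1) := by
    rw [← sq_abs, ← rpow_natCast, ← rpow_mul (abs_nonneg z), ← rpow_natCast]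
    push_cast
    ring_nf
  rw [one_div_div, div_rpow zero_le_two (sq_nonneg z), htwo, hsq, div_eq_mul_inv]
  ring

/-- Lemma 4: the exact value of `∫₀¹ (1−u)^{−1/2} u^{−b−3/2} e^{−z²/(2u)} du`. -/
theorem stmt_9 (b : ℕ) (z : ℝ) (hz : z ≠ 0) :
    ∫ u in Set.Ioo (0 : ℝ) 1,
        (1 - u) ^ (-(1 : ℝ) / 2) * u ^ (-(b : ℝ) - 3 / 2) * Real.exp (-z ^ 2 / (2 * u))
      = Real.sign z * Real.sqrt (2 * Real.pi) * Real.exp (-z ^ 2 / 2) *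
          ∑ k ∈ Finset.range (b + 1),
            ((2 * k - 1).doubleFactorial : ℝ) * (b.choose k : ℝ) *
              (z ^ (2 * k + 1))⁻¹ := by
  have hintegrand : ∀ u : ℝ, (1 - u) ^ (-(1 : ℝ) / 2) * u ^ (-(b : ℝ) - 3 / 2)
        * exp (-z ^ 2 / (2 * u))
      = (1 - u) ^ (-(1 : ℝ) / 2) * u ^ (-(b : ℝ) - (-1 / 2) - 2) * exp (-(z ^ 2 / 2 * u⁻¹)) :=
    fun u => by ring_nf
  have hhalf : ∀ k : ℕ, (k : ℝ) + -1 / 2 + 1 = k + 1 / 2 := fun k => by ring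
  simp_rw [hintegrand]
  rw [integral_Ioo_zero_one_eq_integral_Ioi b]
  simp only [rpow_natCast]
  rw [integral_rpow_mul_one_add_pow_mul_exp_neg_mul b (by norm_num) (by positivity)]
  simp_rw [hhalf, neg_div, Gamma_nat_add_half, one_div_sq_div_two_rpow_nat_add_half,
    ← sign_mul_inv_pow_odd, sqrt_mul zero_le_two, mul_sum]
  refine sum_congr rfl fun k _ => ?_
  field_simp
end

section
/- Suppose γ : ℤ × ℕ × ℕ → ℝ satisfies: γ(0,0,ℓ) = 1 for all ℓ; γ(q,j,ℓ) = 0 whenever q < 0 or q > j; and for all integers j ≥ 1, 0 ≤ q ≤ j and ℓ ≥ 0, γ(q,j,ℓ) = ((ℓ+1/2)/(j−1/2)) · γ(q,j−1,ℓ+1) − (1/(2(j−1/2))) · γ(q−1,j−1,ℓ+2). Then for all integers 0 ≤ q ≤ j and ℓ ≥ 0, γ(q,j,ℓ) = ((−1)^q · 2^j / (2^q · (2j−1)!!)) · Σ ∏_{i=1}^{j−q} (ℓ + 2a_i − i − 1/2), where the sum runs over all strictly increasing sequences 1 ≤ a₁ < a₂ < ⋯ < a_{j−q} ≤ j of integers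 (i.e. over all (j−q)-element subsets of {1,…,j} listed in increasing order), and when q = j the sum is understood to equal 1. -/
open Finset Real

/-- auxiliary recursive polynomial family -/
noncomputable def Tpoly : ℕ → ℕ → ℝ → ℝ
  | 0, _, _ => 1
  | _+1, 0, _ => 0
  | k+1, m+1, ℓ => (ℓ + 2*((m:ℝ)+1) - ((k:ℝ)+1) - 1/2) * Tpoly k m ℓ + Tpoly (k+1) m ℓ

lemma Tpoly_zero (m : ℕ) (ℓ : ℝ) : Tpoly 0 m ℓ = 1 := by simp [Tpoly]
lemma Tpoly_nil (k : ℕ) (ℓ : ℝ) : Tpoly (k+1) 0 ℓ = 0 := by simp [Tpoly]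
lemma Tpoly_succ (k m : ℕ) (ℓ : ℝ) :
    Tpoly (k+1) (m+1) ℓ
      = (ℓ + 2*((m:ℝ)+1) - ((k:ℝ)+1) - 1/2) * Tpoly k m ℓ + Tpoly (k+1) m ℓ := by
  simp [Tpoly]

lemma Tpoly_zero_of_lt : ∀ m k : ℕ, m < k → ∀ ℓ : ℝ, Tpoly k m ℓ = 0 := by
  intro m
  induction m with
  | zero =>
    intro k hk ℓ
    match k with
    | k+1 => exact Tpoly_nil k ℓ
  | succ m ih =>
    intro k hk ℓ
    match k with
    | k+1 =>
      rw [Tpoly_succ, ih k (by omega), ih (k+1) (by omega)]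
      ring

lemma Tpoly_shift : ∀ j k : ℕ, ∀ ℓ : ℝ,
    Tpoly (k+1) (j+1) ℓ = (ℓ + 1/2) * Tpoly k j (ℓ+1) + Tpoly (k+1) j (ℓ+2) := by
  intro j
  induction j with
  | zero =>
    intro k ℓ
    match k with
    | 0 => simp [Tpoly_succ, Tpoly_zero, Tpoly_nil]; ring
    | k+1 => simp [Tpoly_succ, Tpoly_zero, Tpoly_nil, Tpoly_zero_of_lt k 0]
  | succ j ih =>
    intro k ℓ
    match k with
    | 0 =>
      rw [Tpoly_succ 0 (j+1) ℓ, ih 0 ℓ, Tpoly_succ 0 j (ℓ+2)]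
      simp only [Tpoly_zero]
      push_cast
      ring
    | k+1 =>
      rw [Tpoly_succ (k+1) (j+1) ℓ, ih (k+1) ℓ, ih k ℓ, Tpoly_succ k j (ℓ+1),
        Tpoly_succ (k+1) j (ℓ+2)]
      push_cast
      ring

lemma rank_lemma (s : Finset ℕ) {k : ℕ} (h : s.card = k) (i : Fin k) :
    (s.filter (· < (s.orderEmbOfFin h i))).card = (i : ℕ) := by
  have himg : s.filter (· < (s.orderEmbOfFin h i))
      = (Finset.Iio i).image (s.orderEmbOfFin h) := by
    ext x
    simp only [mem_filter, mem_image, Finset.mem_Iio]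
    constructor
    · rintro ⟨hxs, hlt⟩
      obtain ⟨m, rfl⟩ : ∃ m, s.orderEmbOfFin h m = x := by
        have := Finset.range_orderEmbOfFin s h
        have : x ∈ Set.range (s.orderEmbOfFin h) := by rw [this]; exact_mod_cast hxs
        exact this
      exact ⟨m, (s.orderEmbOfFin h).strictMono.lt_iff_lt.mp hlt, rfl⟩
    · rintro ⟨m, hm, rfl⟩
      exact ⟨Finset.orderEmbOfFin_mem s h m, (s.orderEmbOfFin h).strictMono hm⟩
  rw [himg, Finset.card_image_of_injective _ (s.orderEmbOfFin h).injective, Fin.card_Iio]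

lemma prod_conv (s : Finset ℕ) {k : ℕ} (h : s.card = k) (f : ℕ → ℕ → ℝ) :
    (∏ i : Fin k, f ((s.orderIsoOfFin h i : ℕ)) (i : ℕ))
      = ∏ x ∈ s, f x ((s.filter (· < x)).card) := by
  rw [← Finset.prod_coe_sort s (fun x => f x ((s.filter (· < x)).card))]
  refine Finset.prod_equiv (s.orderIsoOfFin h).toEquiv (by simp) ?_
  intro i _
  have h2 : ((s.orderIsoOfFin h).toEquiv i : ℕ) = s.orderEmbOfFin h i :=
    Finset.coe_orderIsoOfFin_apply s h i
  rw [h2, rank_lemma s h i, Finset.coe_orderIsoOfFin_apply]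

noncomputable def Pfun (ℓ : ℝ) (s : Finset ℕ) : ℝ :=
  ∏ x ∈ s, (ℓ + 2*(x:ℝ) - ((s.filter (· < x)).card : ℝ) - 3/2)

lemma Pfun_insert (ℓ : ℝ) (t : Finset ℕ) (j : ℕ) (ht : t ⊆ Icc 1 j) :
    Pfun ℓ (insert (j+1) t)
      = (ℓ + 2*((j:ℝ)+1) - (t.card : ℝ) - 3/2) * Pfun ℓ t := by
  have hnot : (j+1) ∉ t := fun hc => by
    have := mem_Icc.mp (ht hc); omega
  have hlt : ∀ x ∈ t, x < j + 1 := fun x hx => by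
    have := mem_Icc.mp (ht hx); omega
  unfold Pfun
  rw [Finset.prod_insert hnot]
  have h1 : (insert (j+1) t).filter (· < (j+1)) = t := by
    ext x
    simp only [mem_filter, mem_insert]
    constructor
    · rintro ⟨h | h, hx⟩
      · omega
      · exact h
    · intro hx; exact ⟨Or.inr hx, hlt x hx⟩
  have h2 : ∀ x ∈ t, (insert (j+1) t).filter (· < x) = t.filter (· < x) := by
    intro x hx
    rw [Finset.filter_insert]
    have : ¬ (j+1 < x) := by have := hlt x hx; omega
    simp [this]
  have h3 : ∏ x ∈ t, (ℓ + 2*(x:ℝ) - (((insert (j+1) t).filter (· < x)).card : ℝ) - 3/2)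
      = ∏ x ∈ t, (ℓ + 2*(x:ℝ) - ((t.filter (· < x)).card : ℝ) - 3/2) :=
    Finset.prod_congr rfl (fun x hx => by rw [h2 x hx])
  rw [h1, h3]
  push_cast
  ring

lemma sum_P : ∀ j k : ℕ, ∀ ℓ : ℝ,
    ∑ s ∈ (Icc 1 j).powersetCard k, Pfun ℓ s = Tpoly k j ℓ := by
  intro j
  induction j with
  | zero =>
    intro k ℓ
    match k with
    | 0 => simp [Pfun, Tpoly_zero]
    | k+1 =>
      rw [Tpoly_nil]
      have : (Icc 1 0 : Finset ℕ) = ∅ := by simp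
      rw [this, Finset.powersetCard_eq_empty.mpr (by simp), Finset.sum_empty]
  | succ j ih =>
    intro k ℓ
    match k with
    | 0 => simp [Pfun, Tpoly_zero]
    | k+1 =>
      have hnot : (j+1) ∉ Icc 1 j := by simp
      have hIcc : Icc 1 (j+1) = insert (j+1) (Icc 1 j) := by
        ext x; simp [mem_Icc, mem_insert]; omega
      rw [hIcc, Finset.powersetCard_succ_insert hnot]
      rw [Finset.sum_union]
      · rw [ih (k+1) ℓ, Finset.sum_image ?inj]
        case inj =>
          intro t1 h1 t2 h2 heq
          have n1 : (j+1) ∉ t1 := fun hc => by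
            have := (mem_powersetCard.mp h1).1 hc
            simp at this
          have n2 : (j+1) ∉ t2 := fun hc => by
            have := (mem_powersetCard.mp h2).1 hc
            simp at this
          rw [← Finset.erase_insert n1, ← Finset.erase_insert n2, heq]
        have : ∀ t ∈ (Icc 1 j).powersetCard k,
            Pfun ℓ (insert (j+1) t) = (ℓ + 2*((j:ℝ)+1) - ((k:ℝ)+1) - 1/2) * Pfun ℓ t := by
          intro t ht
          obtain ⟨hsub, hcard⟩ := mem_powersetCard.mp ht
          rw [Pfun_insert ℓ t j hsub, hcard]
          ring_nf
        rw [Finset.sum_congr rfl this, ← Finset.mul_sum, ih k ℓ, Tpoly_succ]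
        ring
      · rw [Finset.disjoint_left]
        intro t ht htimg
        have hn : (j+1) ∉ t := fun hc => by
          have := (mem_powersetCard.mp ht).1 hc
          simp at this
        obtain ⟨u, hu, heq⟩ := Finset.mem_image.mp htimg
        exact hn (heq ▸ Finset.mem_insert_self _ _)

lemma Dsucc (j : ℕ) :
    (((2*(j+1)-1).doubleFactorial : ℕ) : ℝ)
      = (2*(j:ℝ)+1) * (((2*j-1).doubleFactorial : ℕ) : ℝ) := by
  match j with
  | 0 => norm_num [Nat.doubleFactorial]
  | m+1 =>
    have h1 : 2*(m+1+1)-1 = (2*(m+1)-1) + 2 := by omega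
    rw [h1, Nat.doubleFactorial_add_two]
    push_cast
    have h2 : 2*(m+1)-1 = 2*m+1 := by omega
    rw [h2]
    push_cast
    ring

/-- Lemma 7: closed formula for the recursively defined coefficients `γ(q,j,ℓ)`. -/
theorem stmt_12 (γ : ℤ → ℕ → ℕ → ℝ)
    (h0 : ∀ ℓ : ℕ, γ 0 0 ℓ = 1)
    (hzero : ∀ (q : ℤ) (j ℓ : ℕ), (q < 0 ∨ (j : ℤ) < q) → γ q j ℓ = 0)
    (hrec : ∀ j : ℕ, 1 ≤ j → ∀ q : ℤ, 0 ≤ q → q ≤ (j : ℤ) → ∀ ℓ : ℕ,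
      γ q j ℓ = (((ℓ : ℝ) + 1 / 2) / ((j : ℝ) - 1 / 2)) * γ q (j - 1) (ℓ + 1)
        - (1 / (2 * ((j : ℝ) - 1 / 2))) * γ (q - 1) (j - 1) (ℓ + 2)) :
    ∀ q j ℓ : ℕ, q ≤ j →
      γ (q : ℤ) j ℓ
        = ((-1 : ℝ) ^ q * 2 ^ j / (2 ^ q * ((2 * j - 1).doubleFactorial : ℝ))) *
          ∑ s ∈ ((Finset.Icc 1 j).powersetCard (j - q)).attach,
            ∏ i : Fin (j - q),
              ((ℓ : ℝ)
                + 2 * ((s.1.orderIsoOfFin (Finset.mem_powersetCard.mp s.2).2 i : ℕ) : ℝ)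
                - ((i : ℕ) : ℝ) - 3 / 2) := by
  have hS : ∀ (j k : ℕ) (ℓ : ℝ),
      (∑ s ∈ ((Finset.Icc 1 j).powersetCard k).attach,
        ∏ i : Fin k,
          (ℓ + 2 * ((s.1.orderIsoOfFin (Finset.mem_powersetCard.mp s.2).2 i : ℕ) : ℝ)
            - ((i : ℕ) : ℝ) - 3 / 2))
      = Tpoly k j ℓ := by
    intro j k ℓ
    rw [← sum_P j k ℓ, ← Finset.sum_attach ((Icc 1 j).powersetCard k) (Pfun ℓ)]
    refine Finset.sum_congr rfl ?_
    intro s _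
    exact prod_conv s.1 (Finset.mem_powersetCard.mp s.2).2
      (fun a b => ℓ + 2*(a:ℝ) - (b:ℝ) - 3/2)
  have key : ∀ j q ℓ : ℕ, q ≤ j → γ (q : ℤ) j ℓ
      = ((-1 : ℝ) ^ q * 2 ^ j / (2 ^ q * ((2 * j - 1).doubleFactorial : ℝ)))
        * Tpoly (j - q) j ℓ := by
    intro j
    induction j with
    | zero =>
      intro q ℓ hq
      interval_cases q
      simp only [Nat.cast_zero, Nat.sub_self]
      rw [h0 ℓ, Tpoly_zero]
      norm_num [Nat.doubleFactorial]
    | succ j ih =>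
      intro q ℓ hq
      have hDne : (((2*j-1).doubleFactorial : ℕ) : ℝ) ≠ 0 := by
        exact_mod_cast (Nat.doubleFactorial_pos _).ne'
      have h2j : (2*(j:ℝ)+1) ≠ 0 := by positivity
      have hcoef : ((j+1 : ℕ) : ℝ) - 1/2 = (2*(j:ℝ)+1)/2 := by push_cast; ring
      match q with
      | 0 =>
        have hr := hrec (j+1) (by omega) 0 le_rfl (by exact_mod_cast Nat.zero_le _) ℓ
        simp only [Nat.add_sub_cancel] at hr
        have hz : γ (0 - 1) j (ℓ+2) = 0 := hzero _ _ _ (Or.inl (by norm_num))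
        have hI := ih 0 (ℓ+1) (Nat.zero_le _)
        simp only [Nat.cast_zero, Nat.sub_zero] at hI
        push_cast at hI
        rw [hz, mul_zero, sub_zero, hI] at hr
        simp only [Nat.cast_zero, Nat.sub_zero]
        rw [hr, Tpoly_shift j j (ℓ:ℝ), Tpoly_zero_of_lt j (j+1) (by omega), Dsucc, hcoef]
        push_cast
        field_simp
        ring
      | p+1 =>
        have hr := hrec (j+1) (by omega) ((p:ℤ)+1) (by positivity)
          (by exact_mod_cast hq) ℓ
        simp only [Nat.add_sub_cancel, add_sub_cancel_right] at hr
        match Nat.lt_or_ge p j with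
        | Or.inl hpj =>
          -- p+1 ≤ j
          have h1 : γ ((p:ℤ)+1) j (ℓ+1)
              = ((-1 : ℝ) ^ (p+1) * 2 ^ j / (2 ^ (p+1) * ((2 * j - 1).doubleFactorial : ℝ)))
                * Tpoly (j - (p+1)) j ((ℓ:ℝ)+1) := by
            have := ih (p+1) (ℓ+1) (by omega)
            push_cast at this ⊢
            convert this using 3 <;> push_cast <;> ring
          have h2 : γ (p:ℤ) j (ℓ+2)
              = ((-1 : ℝ) ^ p * 2 ^ j / (2 ^ p * ((2 * j - 1).doubleFactorial : ℝ)))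
                * Tpoly (j - p) j ((ℓ:ℝ)+2) := by
            have := ih p (ℓ+2) (by omega)
            push_cast at this ⊢
            convert this using 3 <;> push_cast <;> ring
          rw [h1, h2] at hr
          have hjp : j - p = (j - (p+1)) + 1 := by omega
          have hjp2 : j + 1 - (p+1) = (j - (p+1)) + 1 := by omega
          have hT := Tpoly_shift j (j - (p+1)) (ℓ:ℝ)
          have hgoal : γ ((p+1 : ℕ) : ℤ) (j+1) ℓ = γ ((p:ℤ)+1) (j+1) ℓ := by push_cast; ring_nf
          rw [hgoal, hr, hjp2, hjp, hT, Dsucc, hcoef]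
          push_cast
          field_simp
          ring
        | Or.inr hpj =>
          -- p = j, q = j+1
          have hpj' : p = j := by omega
          subst hpj'
          have hz : γ ((p:ℤ)+1) p (ℓ+1) = 0 := hzero _ _ _ (Or.inr (by omega))
          have h2 := ih p (ℓ+2) le_rfl
          push_cast at h2
          rw [hz, mul_zero, h2, Nat.sub_self, Tpoly_zero] at hr
          have hgoal : γ ((p+1 : ℕ) : ℤ) (p+1) ℓ = γ ((p:ℤ)+1) (p+1) ℓ := by push_cast; ring_nf
          rw [hgoal, hr, Nat.sub_self, Tpoly_zero, Dsucc, hcoef]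
          push_cast
          field_simp
          ring
  intro q j ℓ hq
  rw [key j q ℓ hq, hS j (j-q) (ℓ:ℝ)]
end
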